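/- arXiv:math/9912036 — 10 statements merged into one kernel-verified Lean document; each statement's English description precedes it below -/
import Mathlib

section
/- Let c > 0 be a real number and let f : [1,∞) → ℝ be defined by f(x) = x^c. Then f satisfies both constraints — namely f(x) ≥ x for all 1 ≤ x < 2, and (y+1)·f(y) + f(x) ≥ (y+1)·x for all x ≥ 2 and all 1 ≤ y ≤ x — if and only if c ≥ (1+√5)/2. -/
/-!
For `c ≥ φ` it suffices, since `x ^ c` grows with `c` when `x ≥ 1`, to take `c = φ`. The exponents
`φ` and `φ + 1 = φ²` are Hölder conjugate, so Young's inequality bounds `(y + 1) * x` by `x ^ φ`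
plus a multiple of `(y + 1) ^ (φ + 1)`, and for `y ≥ 1` that multiple is at most `(y + 1) * y ^ φ`.

Conversely, the first constraint at `x = 3/2` forces `c ≥ 1`, and the second one at `x = 2 * y ^ c`
gives `y ^ (c + 1 - c ^ 2) < 2 ^ c` for every `y ≥ 1`, which is only possible if `c ^ 2 ≥ c + 1`.
-/

open Real Filter goldenRatio

-- Young's inequality for the factors `p ^ p⁻¹ * a` and `b / p ^ p⁻¹`.
theorem Real.young_inequality_of_nonneg_scaled {a b p q : ℝ} (ha : 0 ≤ a) (hb : 0 ≤ b)
    (hpq : p.HolderConjugate q) : a * b ≤ a ^ p + b ^ q / (q * p ^ (q - 1)) := by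
  have hp := hpq.pos
  set s := p ^ p⁻¹
  have hs : 0 < s := rpow_pos_of_pos hp _
  have hsp : s ^ p = p := by rw [← rpow_mul hp.le, inv_mul_cancel₀ hp.ne', rpow_one]
  have hsq : s ^ q = p ^ (q - 1) := by
    rw [← rpow_mul hp.le, ← hpq.symm.div_conj_eq_sub_one, inv_mul_eq_div]
  calc a * b = (s * a) * (b / s) := by field_simp
    _ ≤ (s * a) ^ p / p + (b / s) ^ q / q :=
      young_inequality_of_nonneg (by positivity) (by positivity) hpq
    _ = a ^ p + b ^ q / (q * p ^ (q - 1)) := by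
      rw [mul_rpow hs.le ha, div_rpow hb hs.le, hsp, hsq]
      field_simp

theorem Real.goldenRatio_holderConjugate : HolderConjugate φ (φ + 1) :=
  (holderConjugate_iff_eq_conjExponent one_lt_goldenRatio).2 <| by
    rw [eq_div_iff (sub_ne_zero.2 one_lt_goldenRatio.ne')]
    linear_combination goldenRatio_sq

theorem Real.add_one_rpow_goldenRatio_le {y : ℝ} (hy : 1 ≤ y) :
    (y + 1) ^ φ ≤ (φ + 1) * φ ^ φ * y ^ φ := by
  have two_rpow_le : (2 : ℝ) ^ φ ≤ 4 := by
    calc (2 : ℝ) ^ φ ≤ 2 ^ (2 : ℝ) :=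
          rpow_le_rpow_of_exponent_le (by norm_num) goldenRatio_lt_two.le
      _ = 4 := by norm_num
  have le_rpow_self : φ ≤ φ ^ φ := by
    simpa using rpow_le_rpow_of_exponent_le one_lt_goldenRatio.le one_lt_goldenRatio.le
  have four_le : (4 : ℝ) ≤ (φ + 1) * φ := by nlinarith [goldenRatio_sq, one_lt_goldenRatio]
  calc (y + 1) ^ φ ≤ (2 * y) ^ φ := by gcongr; linarith
    _ = 2 ^ φ * y ^ φ := mul_rpow zero_le_two (by linarith)
    _ ≤ (φ + 1) * φ ^ φ * y ^ φ := by
      gcongr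
      calc (2 : ℝ) ^ φ ≤ (φ + 1) * φ := two_rpow_le.trans four_le
        _ ≤ (φ + 1) * φ ^ φ := by gcongr

theorem Real.mul_le_rpow_goldenRatio_add {x y : ℝ} (hx : 0 ≤ x) (hy : 1 ≤ y) :
    (y + 1) * x ≤ x ^ φ + (y + 1) * y ^ φ := by
  have hK : 0 < (φ + 1) * φ ^ φ := by positivity
  calc (y + 1) * x = x * (y + 1) := mul_comm _ _
    _ ≤ x ^ φ + (y + 1) ^ (φ + 1) / ((φ + 1) * φ ^ (φ + 1 - 1)) :=
      young_inequality_of_nonneg_scaled hx (by linarith) goldenRatio_holderConjugate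
    _ ≤ x ^ φ + (y + 1) * y ^ φ := by
      rw [add_sub_cancel_right, rpow_add_one (by linarith), add_le_add_iff_left, div_le_iff₀ hK]
      nlinarith [add_one_rpow_goldenRatio_le hy]

theorem Real.mul_le_rpow_add_of_goldenRatio_le {c x y : ℝ} (hc : φ ≤ c) (hx : 1 ≤ x)
    (hy : 1 ≤ y) : (y + 1) * x ≤ (y + 1) * y ^ c + x ^ c := by
  calc (y + 1) * x ≤ x ^ φ + (y + 1) * y ^ φ := mul_le_rpow_goldenRatio_add (by linarith) hy
    _ ≤ x ^ c + (y + 1) * y ^ c := by gcongr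
    _ = (y + 1) * y ^ c + x ^ c := add_comm _ _

theorem Real.goldenRatio_le_of_forall_mul_le_rpow_add {c : ℝ} (hc : 1 ≤ c)
    (h : ∀ x y : ℝ, 2 ≤ x → 1 ≤ y → y ≤ x → (y + 1) * y ^ c + x ^ c ≥ (y + 1) * x) :
    φ ≤ c := by
  by_contra! hlt
  -- `c ^ 2 - c - 1 = (c - φ) * (c + φ - 1)`
  have hε : 0 < c + 1 - c ^ 2 := by
    nlinarith [mul_pos (sub_pos.2 hlt) (by linarith : 0 < c + φ - 1), goldenRatio_sq]
  obtain ⟨y, hy1, hyε⟩ : ∃ y : ℝ, 1 ≤ y ∧ 2 ^ c ≤ y ^ (c + 1 - c ^ 2) :=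
    ((eventually_ge_atTop 1).and ((tendsto_rpow_atTop hε).eventually_ge_atTop _)).exists
  have hy0 : 0 < y := by linarith
  have hyc : y ≤ y ^ c := by simpa using rpow_le_rpow_of_exponent_le hy1 hc
  have key := h (2 * y ^ c) y (by linarith) hy1 (by linarith [rpow_pos_of_pos hy0 c])
  have hpow : (2 * y ^ c) ^ c = 2 ^ c * y ^ (c ^ 2) := by
    rw [mul_rpow zero_le_two (rpow_nonneg hy0.le c), ← rpow_mul hy0.le, sq]
  have hsplit : y ^ c * y = y ^ (c ^ 2) * y ^ (c + 1 - c ^ 2) := by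
    rw [← rpow_add_one hy0.ne', ← rpow_add hy0]
    ring_nf
  have hyc_pos := rpow_pos_of_pos hy0 c
  have : y ^ c * y < y ^ c * y :=
    calc y ^ c * y < (y + 1) * y ^ c := by linarith
      _ ≤ 2 ^ c * y ^ (c ^ 2) := by nlinarith
      _ ≤ y ^ (c + 1 - c ^ 2) * y ^ (c ^ 2) := by gcongr
      _ = y ^ c * y := by rw [hsplit, mul_comm]
  exact lt_irrefl _ this

theorem rpow_mem_X_iff_general (c : ℝ) :
    ((∀ x : ℝ, 1 ≤ x → x < 2 → x ^ c ≥ x) ∧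
      (∀ x y : ℝ, 2 ≤ x → 1 ≤ y → y ≤ x → (y + 1) * y ^ c + x ^ c ≥ (y + 1) * x)) ↔
    (1 + Real.sqrt 5) / 2 ≤ c := by
  constructor
  · rintro ⟨h_small, h_large⟩
    have hc : 1 ≤ c := (rpow_le_rpow_left_iff (by norm_num : (1 : ℝ) < 3 / 2)).1 <| by
      simpa using h_small (3 / 2) (by norm_num) (by norm_num)
    exact goldenRatio_le_of_forall_mul_le_rpow_add hc h_large
  · intro hc
    have hc1 : 1 ≤ c := one_lt_goldenRatio.le.trans hc
    refine ⟨fun x hx _ => ?_, fun x y hx hy _ => ?_⟩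
    · simpa using rpow_le_rpow_of_exponent_le hx hc1
    · exact mul_le_rpow_add_of_goldenRatio_le hc (by linarith) hy

/-- f(x) = x^c satisfies the two constraints of the class X
if and only if c ≥ (1+√5)/2. -/
theorem rpow_mem_X_iff (c : ℝ) (hc : 0 < c) :
    ((∀ x : ℝ, 1 ≤ x → x < 2 → x ^ c ≥ x) ∧
      (∀ x y : ℝ, 2 ≤ x → 1 ≤ y → y ≤ x → (y + 1) * y ^ c + x ^ c ≥ (y + 1) * x)) ↔
    (1 + Real.sqrt 5) / 2 ≤ c :=
  rpow_mem_X_iff_general c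
end

section
/- Let c = (1+√5)/2. Then for all real x ≥ 0 and all real y ≥ 1, one has (y+1)·y^c + x^c − (y+1)·x ≥ 0. -/
/-!
The exponents `φ` and `φ + 1 = φ²` are Hölder conjugate, so Young's inequality bounds
`(y + 1) * x - x ^ φ` by `(y + 1) ^ (φ + 1) / φ ^ (φ + 2)`, uniformly in `x`. For `y ≥ 1` this is at
most `(y + 1) * y ^ φ`, because `(y + 1) ^ φ ≤ (2 * y) ^ φ` and `2 ≤ φ ^ (2 * φ - 1)`.
-/

open Real
open scoped goldenRatio

namespace Real

theorem mul_le_rpow_add_div_of_holderConjugate {p q a x : ℝ} (hpq : p.HolderConjugate q)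
    (ha : 0 ≤ a) (hx : 0 ≤ x) : a * x ≤ x ^ p + a ^ q / (q * p ^ (q / p)) := by
  -- Young's inequality for the pair `k * x`, `a / k`, with `k ^ p = p`.
  set k := p ^ p⁻¹
  have hp := hpq.pos
  have hk : 0 < k := rpow_pos_of_pos hp _
  have hkp : k ^ p = p := by rw [← rpow_mul hp.le, inv_mul_cancel₀ hp.ne', rpow_one]
  have hkq : k ^ q = p ^ (q / p) := by rw [← rpow_mul hp.le, inv_mul_eq_div]
  have young := young_inequality_of_nonneg (mul_nonneg hk.le hx) (div_nonneg ha hk.le) hpq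
  rw [mul_rpow hk.le hx, hkp, div_rpow ha hk.le, hkq] at young
  calc a * x = k * x * (a / k) := by field_simp
    _ ≤ p * x ^ p / p + a ^ q / p ^ (q / p) / q := young
    _ = x ^ p + a ^ q / (q * p ^ (q / p)) := by field_simp

theorem holderConjugate_goldenRatio : HolderConjugate φ (φ + 1) := by
  rw [holderConjugate_iff_eq_conjExponent one_lt_goldenRatio,
    eq_div_iff (sub_ne_zero.2 one_lt_goldenRatio.ne')]
  linear_combination goldenRatio_sq

theorem mul_le_rpow_goldenRatio_add_div {a x : ℝ} (ha : 0 ≤ a) (hx : 0 ≤ x) :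
    a * x ≤ x ^ φ + a ^ (φ + 1) / φ ^ (φ + 2) := by
  have hexp : (φ + 1) / φ = φ := by
    rw [div_eq_iff goldenRatio_ne_zero, ← sq, goldenRatio_sq]
  have hconst : (φ + 1) * φ ^ ((φ + 1) / φ) = φ ^ (φ + 2) := by
    rw [hexp, rpow_add goldenRatio_pos, rpow_two, goldenRatio_sq, mul_comm]
  simpa only [hconst] using
    mul_le_rpow_add_div_of_holderConjugate holderConjugate_goldenRatio ha hx

theorem two_rpow_goldenRatio_le : (2 : ℝ) ^ φ ≤ φ ^ (φ + 2) := by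
  have hφ := goldenRatio_pos
  have h2 : (2 : ℝ) ≤ φ ^ (2 * φ - 1) :=
    calc (2 : ℝ) ≤ φ ^ (2 : ℝ) := by rw [rpow_two, goldenRatio_sq]; linarith [one_lt_goldenRatio]
      _ ≤ φ ^ (2 * φ - 1) := by
        apply rpow_le_rpow_of_exponent_le one_lt_goldenRatio.le
        nlinarith [goldenRatio_sq, one_lt_goldenRatio]
  calc (2 : ℝ) ^ φ ≤ (φ ^ (2 * φ - 1)) ^ φ := rpow_le_rpow zero_le_two h2 hφ.le
    _ = φ ^ (φ + 2) := by
      rw [← rpow_mul hφ.le]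
      congr 1
      linear_combination 2 * goldenRatio_sq

theorem rpow_goldenRatio_add_one_le {y : ℝ} (hy : 1 ≤ y) :
    (y + 1) ^ (φ + 1) ≤ φ ^ (φ + 2) * ((y + 1) * y ^ φ) := by
  have hφ := goldenRatio_pos
  have hy0 : 0 < y := by linarith
  calc (y + 1) ^ (φ + 1) = (y + 1) * (y + 1) ^ φ := by
        rw [rpow_add (by linarith), rpow_one, mul_comm]
    _ ≤ (y + 1) * (2 ^ φ * y ^ φ) := by
        gcongr
        rw [← mul_rpow zero_le_two hy0.le]
        exact rpow_le_rpow (by linarith) (by linarith) hφ.le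
    _ ≤ (y + 1) * (φ ^ (φ + 2) * y ^ φ) := by gcongr; exact two_rpow_goldenRatio_le
    _ = φ ^ (φ + 2) * ((y + 1) * y ^ φ) := by ring

end Real

/-- with c the golden ratio, Φ_y(x) ≥ 0 for all x ≥ 0, y ≥ 1. -/
theorem Phi_nonneg_of_golden (c : ℝ) (hc : c = (1 + Real.sqrt 5) / 2) :
    ∀ x y : ℝ, 0 ≤ x → 1 ≤ y → (y + 1) * y ^ c + x ^ c - (y + 1) * x ≥ 0 := by
  intro x y hx hy
  change c = φ at hc
  subst hc
  have young := mul_le_rpow_goldenRatio_add_div (by linarith : (0 : ℝ) ≤ y + 1) hx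
  have hbound : (y + 1) ^ (φ + 1) / φ ^ (φ + 2) ≤ (y + 1) * y ^ φ :=
    (div_le_iff₀' (rpow_pos_of_pos goldenRatio_pos _)).2 (rpow_goldenRatio_add_one_le hy)
  linarith
end

section
/- Let c be a real number with 1 < c < (1+√5)/2. Then there exist real numbers x ≥ 2 and y with 1 ≤ y ≤ x such that (y+1)·y^c + x^c − (y+1)·x < 0. Consequently the function x ↦ x^c violates the constraint (y+1)·f(y) + f(x) ≥ (y+1)·x. -/
/-- for 1 < c < (1+√5)/2 there exist x ≥ 2 and 1 ≤ y ≤ x with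
Φ_y(x) < 0; consequently x ↦ x^c violates the constraint
(y+1)·f(y) + f(x) ≥ (y+1)·x. -/
theorem exists_Phi_neg (c : ℝ) (hc1 : 1 < c) (hc2 : c < (1 + Real.sqrt 5) / 2) :
    (∃ x y : ℝ, 2 ≤ x ∧ 1 ≤ y ∧ y ≤ x ∧ (y + 1) * y ^ c + x ^ c - (y + 1) * x < 0) ∧
    ¬ (∀ x y : ℝ, 2 ≤ x → 1 ≤ y → y ≤ x → (y + 1) * y ^ c + x ^ c ≥ (y + 1) * x) := by
  have h5 : Real.sqrt 5 ^ 2 = 5 := Real.sq_sqrt (by norm_num)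
  have hε : 0 < c + 1 - c ^ 2 := by nlinarith [Real.sqrt_nonneg 5]
  set ε : ℝ := c + 1 - c ^ 2 with hεdef
  have hc0 : 0 < c := by linarith
  set y : ℝ := (2 : ℝ) ^ (c / ε) with hy
  have hy0 : 0 < y := Real.rpow_pos_of_pos (by norm_num) _
  have hy1 : 1 ≤ y := Real.one_le_rpow (by norm_num) (by positivity)
  set x : ℝ := 2 * y ^ c with hx
  have hyc1 : 1 ≤ y ^ c := Real.one_le_rpow hy1 hc0.le
  have hyc0 : 0 < y ^ c := lt_of_lt_of_le one_pos hyc1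
  have hx2 : 2 ≤ x := by nlinarith
  have hyx : y ≤ x := by
    have : y ≤ y ^ c := by
      nth_rewrite 1 [← Real.rpow_one y]
      exact Real.rpow_le_rpow_of_exponent_le hy1 hc1.le
    nlinarith
  -- key: y ^ ε = 2 ^ c
  have hyε : y ^ ε = (2 : ℝ) ^ c := by
    rw [hy, ← Real.rpow_mul (by norm_num), div_mul_cancel₀ _ hε.ne']
  have hxc : x ^ c = y * y ^ c := by
    rw [hx, Real.mul_rpow (by norm_num) hyc0.le, ← Real.rpow_mul hy0.le, ← hyε,
      ← Real.rpow_add hy0]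
    have hee : ε + c * c = 1 + c := by rw [hεdef]; ring
    rw [hee, Real.rpow_add hy0, Real.rpow_one]
  have key : (y + 1) * y ^ c + x ^ c - (y + 1) * x < 0 := by
    rw [hxc, hx]; nlinarith
  refine ⟨⟨x, y, hx2, hy1, hyx, key⟩, fun h => ?_⟩
  have := h x y hx2 hy1 hyx
  linarith
end

section
/- Let c be a real number with 1 < c < (1+√5)/2, and for y ≥ 1 set x_y = ((y+1)/c)^(1/(c−1)). Then the minimum value m(y) = (y+1)·[y^c + x_y·(1/c − 1)] tends to −∞ as y → ∞. -/
open Filter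

/-- for 1 < c < (1+√5)/2, the minimum value
m(y) = (y+1)·(y^c + x_y·(1/c − 1)) with x_y = ((y+1)/c)^(1/(c−1))
tends to −∞ as y → ∞. -/
theorem min_value_tendsto_atBot (c : ℝ) (hc1 : 1 < c) (hc2 : c < (1 + Real.sqrt 5) / 2) :
    Tendsto (fun y : ℝ =>
        (y + 1) * (y ^ c + ((y + 1) / c) ^ (1 / (c - 1)) * (1 / c - 1)))
      atTop atBot := by
  have hc0 : (0:ℝ) < c := lt_trans one_pos hc1
  have hcm1 : (0:ℝ) < c - 1 := sub_pos.2 hc1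
  set b : ℝ := 1 + 1 / (c - 1) with hb
  set K : ℝ := (1 - 1 / c) / c ^ (1 / (c - 1)) with hKdef
  have hK : 0 < K := by
    apply div_pos
    · have : 1 / c < 1 := by rw [div_lt_one hc0]; exact hc1
      linarith
    · exact Real.rpow_pos_of_pos hc0 _
  have hab : c + 1 < b := by
    have h5 : Real.sqrt 5 ^ 2 = 5 := Real.sq_sqrt (by norm_num)
    have hcc : c * (c - 1) < 1 := by nlinarith [Real.sqrt_nonneg 5]
    have : c < 1 / (c - 1) := by rw [lt_div_iff₀ hcm1]; linarith
    simp only [hb]; linarith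
  have hbpos : 0 < b := by positivity
  have hg : Tendsto (fun y : ℝ => (y+1)^b * ((y+1)^(c+1-b) - K)) atTop atBot := by
    have hy1 : Tendsto (fun y : ℝ => y + 1) atTop atTop :=
      tendsto_atTop_add_const_right _ 1 tendsto_id
    have h1 : Tendsto (fun y : ℝ => (y+1)^b) atTop atTop :=
      (tendsto_rpow_atTop hbpos).comp hy1
    have h2 : Tendsto (fun y : ℝ => (y+1)^(c+1-b) - K) atTop (nhds (0 - K)) := by
      have h3 : Tendsto (fun y : ℝ => (y+1) ^ (-(b-(c+1)))) atTop (nhds 0) :=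
        (tendsto_rpow_neg_atTop (by linarith)).comp hy1
      have h4 : Tendsto (fun y : ℝ => (y+1) ^ (c+1-b)) atTop (nhds 0) := by
        convert h3 using 2; ring_nf
      exact h4.sub_const K
    exact h1.atTop_mul_neg (by linarith) h2
  apply tendsto_atBot_mono' atTop _ hg
  filter_upwards [eventually_ge_atTop (0:ℝ)] with y hy
  have hy1 : (0:ℝ) < y + 1 := by linarith
  have e1 : ((y + 1) / c) ^ (1 / (c - 1)) = (y+1)^(1/(c-1)) / c^(1/(c-1)) :=
    Real.div_rpow (le_of_lt hy1) (le_of_lt hc0) _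
  have e2 : (y+1) * (y+1)^(1/(c-1)) = (y+1)^b := by
    rw [hb, Real.rpow_add hy1, Real.rpow_one]
  have e3 : (y+1)^b * (y+1)^(c+1-b) = (y+1)^(c+1) := by
    rw [← Real.rpow_add hy1]; ring_nf
  have e4 : (y+1) * (y+1)^c = (y+1)^(c+1) := by
    rw [Real.rpow_add hy1, Real.rpow_one]; ring
  have h5 : (y+1) * y^c ≤ (y+1)^(c+1) := by
    rw [← e4]
    exact mul_le_mul_of_nonneg_left (Real.rpow_le_rpow hy (by linarith) (le_of_lt hc0)) (le_of_lt hy1)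
  have lhs_eq : (y + 1) * (y ^ c + ((y + 1) / c) ^ (1 / (c - 1)) * (1 / c - 1))
      = (y+1) * y^c - K * (y+1)^b := by
    have key : (y+1) * ((y+1)^(1/(c-1)) / c^(1/(c-1)) * (1/c - 1)) = -(K * (y+1)^b) := by
      rw [hKdef, ← e2]
      have hcr : c ^ (1/(c-1)) ≠ 0 := ne_of_gt (Real.rpow_pos_of_pos hc0 _)
      field_simp
      ring
    rw [e1, mul_add, key]
    ring
  rw [lhs_eq]
  have : (y+1)^b * ((y+1)^(c+1-b) - K) = (y+1)^(c+1) - K * (y+1)^b := by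
    rw [mul_sub, e3]; ring
  rw [this]
  linarith
end

section
/- Let c = (1+√5)/2, so that 1/(c−1) = c. Then for every real y ≥ 1, y^c − (1/c²)·((y+1)/c)^c ≥ 0; equivalently, the minimum value (y+1)·[y^c + ((y+1)/c)^c·(1/c − 1)] of Φ_y over x ≥ 0 is nonnegative. -/
/-- with c the golden ratio (so 1/(c−1) = c), for every y ≥ 1 we have
y^c − (1/c²)·((y+1)/c)^c ≥ 0; equivalently the minimum value of Φ_y over x ≥ 0,
namely (y+1)·(y^c + ((y+1)/c)^c·(1/c − 1)), is nonnegative. -/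
theorem golden_min_value_nonneg (c : ℝ) (hc : c = (1 + Real.sqrt 5) / 2) :
    ∀ y : ℝ, 1 ≤ y →
      y ^ c - (1 / c ^ 2) * ((y + 1) / c) ^ c ≥ 0 ∧
      (y + 1) * (y ^ c + ((y + 1) / c) ^ c * (1 / c - 1)) ≥ 0 := by
  have h5 : Real.sqrt 5 ^ 2 = 5 := Real.sq_sqrt (by norm_num)
  have h5lb : (2 : ℝ) ≤ Real.sqrt 5 := by
    nlinarith [Real.sqrt_nonneg 5]
  have h5ub : Real.sqrt 5 ≤ 3 := by
    nlinarith [Real.sqrt_nonneg 5]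
  have hc1 : (3/2 : ℝ) ≤ c := by rw [hc]; linarith
  have hc2 : c ≤ 2 := by rw [hc]; linarith
  have hcpos : (0 : ℝ) < c := by linarith
  have hcsq : c ^ 2 = c + 1 := by rw [hc]; nlinarith
  intro y hy
  have hypos : (0 : ℝ) < y := by linarith
  have hy1 : (0 : ℝ) ≤ y + 1 := by linarith
  -- key bound : ((y+1)/c)^c ≤ (c+1) * y^c
  have key : ((y + 1) / c) ^ c ≤ (c + 1) * y ^ c := by
    have step1 : ((y + 1) / c) ^ c ≤ ((2 / c) * y) ^ c := by
      apply Real.rpow_le_rpow (by positivity) _ (le_of_lt hcpos)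
      have h2 : (2 / c) * y = (2 * y) / c := by ring
      rw [h2]
      gcongr
      linarith
    have step2 : ((2 / c) * y) ^ c = (2 / c) ^ c * y ^ c :=
      Real.mul_rpow (by positivity) (le_of_lt hypos)
    have h2c : (2 / c : ℝ) ≤ c := by
      rw [div_le_iff₀ hcpos]; nlinarith
    have step3 : (2 / c) ^ c ≤ c ^ c :=
      Real.rpow_le_rpow (by positivity) h2c (le_of_lt hcpos)
    have step4 : (c : ℝ) ^ c ≤ c ^ (2 : ℝ) :=
      Real.rpow_le_rpow_of_exponent_le (by linarith) hc2
    have step5 : (c : ℝ) ^ (2 : ℝ) = c + 1 := by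
      rw [show (2:ℝ) = ((2:ℕ):ℝ) by norm_num, Real.rpow_natCast]
      exact hcsq
    have hypow : (0 : ℝ) ≤ y ^ c := le_of_lt (Real.rpow_pos_of_pos hypos c)
    calc ((y + 1) / c) ^ c ≤ (2 / c) ^ c * y ^ c := by rw [← step2]; exact step1
      _ ≤ c ^ c * y ^ c := mul_le_mul_of_nonneg_right step3 hypow
      _ ≤ (c + 1) * y ^ c := mul_le_mul_of_nonneg_right (step4.trans step5.le) hypow
  have first : y ^ c - (1 / c ^ 2) * ((y + 1) / c) ^ c ≥ 0 := by
    have hc2pos : (0 : ℝ) < c ^ 2 := by positivity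
    rw [ge_iff_le, sub_nonneg, div_mul_eq_mul_div, div_le_iff₀ hc2pos, hcsq]
    linarith [key]
  refine ⟨first, ?_⟩
  have hinv : 1 / c - 1 = -(1 / c ^ 2) := by
    field_simp
    nlinarith
  rw [hinv]
  have : y ^ c + ((y + 1) / c) ^ c * -(1 / c ^ 2)
      = y ^ c - (1 / c ^ 2) * ((y + 1) / c) ^ c := by ring
  rw [this]
  exact mul_nonneg hy1 first
end

section
/- Define b : [1,8) → ℝ piecewise by b(x) = x for 1 ≤ x < 2, b(x) = 2·(x−1) for 2 ≤ x < 3, b(x) = (x+1)²/4 for 3 ≤ x < 5, and b(x) = 3·(x−2) for 5 ≤ x < 8. Then for every x with 2 ≤ x < 8, the supremum over y ∈ [1,x) of (y+1)·(x − b(y)) is attained and equals b(x). -/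
/-- The conjectured maximizing function on [1,8). -/
noncomputable def b (x : ℝ) : ℝ :=
  if x < 2 then x
  else if x < 3 then 2 * (x - 1)
  else if x < 5 then (x + 1) ^ 2 / 4
  else 3 * (x - 2)

/-- for every 2 ≤ x < 8, the supremum over y ∈ [1,x) of
(y+1)·(x − b(y)) is attained and equals b(x). -/
theorem b_satisfies_recursion (x : ℝ) (hx1 : 2 ≤ x) (hx2 : x < 8) :
    IsGreatest ((fun y : ℝ => (y + 1) * (x - b y)) '' Set.Ico 1 x) (b x) := by
  constructor
  · -- membership: exhibit a maximizer
    rcases lt_or_ge x 3 with h3 | h3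
    · refine ⟨1, ⟨le_refl 1, by linarith⟩, ?_⟩
      simp only [b]
      rw [if_pos (by norm_num : (1:ℝ) < 2), if_neg (not_lt.2 hx1), if_pos h3]
      ring
    · rcases lt_or_ge x 5 with h5 | h5
      · refine ⟨(x - 1) / 2, ⟨by linarith, by linarith⟩, ?_⟩
        simp only [b]
        rw [if_pos (by linarith : (x - 1) / 2 < 2), if_neg (not_lt.2 hx1),
          if_neg (not_lt.2 h3), if_pos h5]
        ring
      · refine ⟨2, ⟨by norm_num, by linarith⟩, ?_⟩
        simp only [b]
        rw [if_neg (by norm_num : ¬ ((2:ℝ) < 2)), if_pos (by norm_num : (2:ℝ) < 3),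
          if_neg (not_lt.2 hx1), if_neg (not_lt.2 h3), if_neg (not_lt.2 h5)]
        ring
  · rintro _ ⟨y, ⟨hy1, hy2⟩, rfl⟩
    simp only [b, if_neg (not_lt.2 hx1)]
    rcases lt_or_ge x 3 with h3 | h3
    · rw [if_pos h3]
      split_ifs with k2 k3 k5
      · nlinarith [mul_nonneg (by linarith : (0:ℝ) ≤ y - 1) (by linarith : (0:ℝ) ≤ y - (x - 2))]
      · nlinarith [mul_nonneg (by linarith : (0:ℝ) ≤ y - 2) (by linarith : (0:ℝ) ≤ y - 1),
          mul_nonneg (by linarith : (0:ℝ) ≤ 3 - x) (by linarith : (0:ℝ) ≤ y - 1)]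
      · linarith
      · linarith
    · rw [if_neg (not_lt.2 h3)]
      rcases lt_or_ge x 5 with h5 | h5
      · rw [if_pos h5]
        split_ifs with k2 k3 k5
        · nlinarith [sq_nonneg (x - 1 - 2 * y)]
        · nlinarith [mul_nonneg (by linarith : (0:ℝ) ≤ y - 2) (by linarith : (0:ℝ) ≤ 2 * y + 4 - x),
            sq_nonneg (x - 5)]
        · nlinarith [mul_nonneg (by linarith : (0:ℝ) ≤ y - 3) (by linarith : (0:ℝ) ≤ 12 - x),
            sq_nonneg (y - 3), sq_nonneg (x - 7),
            mul_nonneg (mul_nonneg (by linarith : (0:ℝ) ≤ y - 3) (by linarith : (0:ℝ) ≤ y - 3))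
              (by linarith : (0:ℝ) ≤ y - 3)]
        · linarith
      · rw [if_neg (not_lt.2 h5)]
        split_ifs with k2 k3 k5
        · nlinarith [mul_nonneg (by linarith : (0:ℝ) ≤ 2 - y) (by linarith : (0:ℝ) ≤ x - 3 - y)]
        · nlinarith [mul_nonneg (by linarith : (0:ℝ) ≤ y - 2) (by linarith : (0:ℝ) ≤ 2 * y + 4 - x)]
        · nlinarith [mul_nonneg (by linarith : (0:ℝ) ≤ y - 3) (by linarith : (0:ℝ) ≤ 12 - x),
            sq_nonneg (y - 3),
            mul_nonneg (mul_nonneg (by linarith : (0:ℝ) ≤ y - 3) (by linarith : (0:ℝ) ≤ y - 3))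
              (by linarith : (0:ℝ) ≤ y - 3)]
        · nlinarith [mul_nonneg (by linarith : (0:ℝ) ≤ 8 - x) (by linarith : (0:ℝ) ≤ y - 2),
            sq_nonneg (y - 5)]
end

section
/- For every real x with 45 ≤ x ≤ 84, the maximum over y ∈ [8,12] of (y+1)·(x − (y+4)²/8) equals (1/4)·[1 − 8x + ((8x+3)/3)^(3/2)], attained at y = √((8x+3)/3) − 3, which lies in [8,12]. -/
/-- for 45 ≤ x ≤ 84, the maximum over y ∈ [8,12] of
(y+1)(x − (y+4)²/8) equals (1/4)[1 − 8x + ((8x+3)/3)^(3/2)],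
attained at y = √((8x+3)/3) − 3 ∈ [8,12]. -/
theorem max_on_Icc_eight_twelve (x : ℝ) (hx1 : 45 ≤ x) (hx2 : x ≤ 84) :
    IsGreatest ((fun y : ℝ => (y + 1) * (x - (y + 4) ^ 2 / 8)) '' Set.Icc 8 12)
      ((1 / 4) * (1 - 8 * x + ((8 * x + 3) / 3) ^ ((3 : ℝ) / 2))) ∧
    IsMaxOn (fun y : ℝ => (y + 1) * (x - (y + 4) ^ 2 / 8)) (Set.Icc 8 12)
      (Real.sqrt ((8 * x + 3) / 3) - 3) ∧
    Real.sqrt ((8 * x + 3) / 3) - 3 ∈ Set.Icc (8 : ℝ) 12 := by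
  set s := Real.sqrt ((8 * x + 3) / 3) with hs
  have ha : (0:ℝ) ≤ (8 * x + 3) / 3 := by linarith
  have hs2 : s ^ 2 = (8 * x + 3) / 3 := Real.sq_sqrt ha
  have hs11 : (11:ℝ) ≤ s := by
    have : Real.sqrt 121 ≤ s := Real.sqrt_le_sqrt (by linarith)
    rwa [show (121:ℝ) = 11^2 by norm_num, Real.sqrt_sq (by norm_num)] at this
  have hs15 : s ≤ 15 := by
    have : s ≤ Real.sqrt 225 := Real.sqrt_le_sqrt (by linarith)
    rwa [show (225:ℝ) = 15^2 by norm_num, Real.sqrt_sq (by norm_num)] at this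
  have hxval : x = (3 * s ^ 2 - 3) / 8 := by rw [hs2]; ring
  have hrpow : ((8 * x + 3) / 3) ^ ((3 : ℝ) / 2) = s ^ 3 := by
    rw [show (3:ℝ)/2 = (1/2) * 3 by ring, Real.rpow_mul ha, ← Real.sqrt_eq_rpow,
      show ((3:ℝ)) = ((3:ℕ):ℝ) by norm_num, Real.rpow_natCast]
    push_cast
    rw [hs]
  have hval : (1 / 4 : ℝ) * (1 - 8 * x + ((8 * x + 3) / 3) ^ ((3 : ℝ) / 2))
      = (s - 3 + 1) * (x - (s - 3 + 4) ^ 2 / 8) := by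
    rw [hrpow, hxval]; ring
  have hmem : s - 3 ∈ Set.Icc (8:ℝ) 12 := ⟨by linarith, by linarith⟩
  have hub : ∀ y ∈ Set.Icc (8:ℝ) 12,
      (y + 1) * (x - (y + 4) ^ 2 / 8) ≤ (s - 3 + 1) * (x - (s - 3 + 4) ^ 2 / 8) := by
    rintro y ⟨hy1, hy2⟩
    nlinarith [mul_nonneg (sq_nonneg (y - s + 3)) (by linarith : (0:ℝ) ≤ y + 3 + 2 * s)]
  refine ⟨⟨⟨s - 3, hmem, by rw [hval]⟩, ?_⟩, ?_, hmem⟩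
  · rintro z ⟨y, hy, rfl⟩
    rw [hval]; exact hub y hy
  · intro y hy
    exact hub y hy
end

section
/- For every real x with 84 ≤ x ≤ 276, the maximum over y ∈ [12,27] of (y+1)·(x − 4·(y/3)^(3/2)) equals (z²+1)·(x − 4z³/3^(3/2)), where z = √y₀ > 0 is the unique positive real number satisfying 10z³ + 6z = 3^(3/2)·x, and the maximum is attained at y₀ = z² ∈ [12,27]. -/
private lemma s3' : (3:ℝ) ^ ((3:ℝ)/2) = 3 * Real.sqrt 3 := by
  rw [show (3:ℝ)/2 = (1:ℝ) + 1/2 by norm_num, Real.rpow_add (by norm_num : (0:ℝ) < 3),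
    Real.rpow_one, ← Real.sqrt_eq_rpow]

private lemma rp' (y : ℝ) (hy : 0 ≤ y) :
    (y/3) ^ ((3:ℝ)/2) = Real.sqrt y ^ 3 / (3 * Real.sqrt 3) := by
  rw [Real.div_rpow hy (by norm_num), s3',
    show ((3:ℝ)/2) = (1/2) * (3:ℕ) by push_cast; ring,
    Real.rpow_mul hy, ← Real.sqrt_eq_rpow, Real.rpow_natCast]

private lemma key' (z t : ℝ) (hz : 0 < z) (ht : 0 ≤ t) :
    (t^2+1)*((10*z^3+6*z) - 4*t^3) ≤ (z^2+1)*((10*z^3+6*z) - 4*z^3) := by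
  nlinarith [mul_nonneg (sq_nonneg (t-z))
    (by positivity : (0:ℝ) ≤ 4*t^3+8*z*t^2+(12*z^2+4)*t+6*z^3+2*z)]

private lemma mono' (w z : ℝ) (hw0 : 0 < w) (hz0 : 0 < z) (h : w < z) :
    10 * w ^ 3 + 6 * w < 10 * z ^ 3 + 6 * z := by
  have hq : (0:ℝ) < z^2 + z*w + w^2 := by nlinarith [mul_pos hw0 hz0]
  nlinarith [mul_pos (sub_pos.mpr h) hq]

/-- for 84 ≤ x ≤ 276, there is a unique positive real z with
10z³ + 6z = 3^(3/2)·x; for this z, y₀ = z² lies in [12,27] and the maximum over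
y ∈ [12,27] of (y+1)(x − 4(y/3)^(3/2)) equals (z²+1)(x − 4z³/3^(3/2)),
attained at y₀ = z². -/
theorem max_on_Icc_twelve_twentyseven (x : ℝ) (hx1 : 84 ≤ x) (hx2 : x ≤ 276) :
    (∃! z : ℝ, 0 < z ∧ 10 * z ^ 3 + 6 * z = (3 : ℝ) ^ ((3 : ℝ) / 2) * x) ∧
    ∀ z : ℝ, 0 < z → 10 * z ^ 3 + 6 * z = (3 : ℝ) ^ ((3 : ℝ) / 2) * x →
      z ^ 2 ∈ Set.Icc (12 : ℝ) 27 ∧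
      IsGreatest ((fun y : ℝ => (y + 1) * (x - 4 * (y / 3) ^ ((3 : ℝ) / 2))) ''
          Set.Icc 12 27)
        ((z ^ 2 + 1) * (x - 4 * z ^ 3 / (3 : ℝ) ^ ((3 : ℝ) / 2))) ∧
      IsMaxOn (fun y : ℝ => (y + 1) * (x - 4 * (y / 3) ^ ((3 : ℝ) / 2)))
        (Set.Icc 12 27) (z ^ 2) := by
  have hs3 : (0:ℝ) < Real.sqrt 3 := Real.sqrt_pos.mpr (by norm_num)
  have hsq3 : Real.sqrt 3 ^ 2 = 3 := Real.sq_sqrt (by norm_num)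
  have h32 : Real.sqrt 3 < 2 := by nlinarith
  have hxpos : (0:ℝ) < x := by linarith
  have hspos : (0:ℝ) < 3 * Real.sqrt 3 := by positivity
  constructor
  · -- existence and uniqueness
    have hcont : ContinuousOn (fun t : ℝ => 10 * t ^ 3 + 6 * t) (Set.Icc 0 x) := by
      fun_prop
    have hmem : (3:ℝ) ^ ((3:ℝ)/2) * x ∈ Set.Icc ((fun t : ℝ => 10 * t ^ 3 + 6 * t) 0)
        ((fun t : ℝ => 10 * t ^ 3 + 6 * t) x) := by
      rw [s3']
      constructor
      · simp; positivity
      · simp only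
        nlinarith [mul_nonneg (by linarith : (0:ℝ) ≤ 2 - Real.sqrt 3) hxpos.le,
          pow_pos hxpos 3]
    obtain ⟨z, hzI, hzeq⟩ := intermediate_value_Icc hxpos.le hcont hmem
    have hzeq' : 10 * z ^ 3 + 6 * z = (3:ℝ) ^ ((3:ℝ)/2) * x := hzeq
    have hz0 : 0 < z := by
      rcases lt_or_eq_of_le hzI.1 with h | h
      · exact h
      · exfalso
        rw [← h] at hzeq'
        rw [s3'] at hzeq'
        nlinarith [mul_pos hspos hxpos]
    refine ⟨z, ⟨hz0, hzeq'⟩, ?_⟩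
    rintro w ⟨hw0, hweq⟩
    have heq : 10 * w ^ 3 + 6 * w = 10 * z ^ 3 + 6 * z := hweq.trans hzeq'.symm
    rcases lt_trichotomy w z with h | h | h
    · exact absurd heq (ne_of_lt (mono' w z hw0 hz0 h))
    · exact h
    · exact absurd heq.symm (ne_of_lt (mono' z w hz0 hw0 h))
  · -- properties of any such z
    intro z hz0 hzeq
    rw [s3'] at hzeq
    have hc2 : (2 * Real.sqrt 3) ^ 3 = 24 * Real.sqrt 3 := by
      calc (2 * Real.sqrt 3) ^ 3 = 8 * (Real.sqrt 3 ^ 2 * Real.sqrt 3) := by ring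
        _ = 24 * Real.sqrt 3 := by rw [hsq3]; ring
    have hc3 : (3 * Real.sqrt 3) ^ 3 = 81 * Real.sqrt 3 := by
      calc (3 * Real.sqrt 3) ^ 3 = 27 * (Real.sqrt 3 ^ 2 * Real.sqrt 3) := by ring
        _ = 81 * Real.sqrt 3 := by rw [hsq3]; ring
    have hzl : 2 * Real.sqrt 3 ≤ z := by
      by_contra h
      push_neg at h
      have h3 : z ^ 3 < (2 * Real.sqrt 3) ^ 3 := by
        apply pow_lt_pow_left₀ h hz0.le
        norm_num
      have hmul : 3 * Real.sqrt 3 * 84 ≤ 3 * Real.sqrt 3 * x :=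
        mul_le_mul_of_nonneg_left hx1 hspos.le
      rw [hc2] at h3
      nlinarith
    have hzu : z ≤ 3 * Real.sqrt 3 := by
      by_contra h
      push_neg at h
      have h3 : (3 * Real.sqrt 3) ^ 3 < z ^ 3 := by
        apply pow_lt_pow_left₀ h (by positivity)
        norm_num
      have hmul : 3 * Real.sqrt 3 * x ≤ 3 * Real.sqrt 3 * 276 :=
        mul_le_mul_of_nonneg_left hx2 hspos.le
      rw [hc3] at h3
      nlinarith
    have hy12 : (12:ℝ) ≤ z ^ 2 := by
      nlinarith [mul_self_le_mul_self (by positivity : (0:ℝ) ≤ 2 * Real.sqrt 3) hzl]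
    have hy27 : z ^ 2 ≤ 27 := by
      nlinarith [mul_self_le_mul_self hz0.le hzu]
    have hmemIcc : z ^ 2 ∈ Set.Icc (12:ℝ) 27 := ⟨hy12, hy27⟩
    have hval : (fun y : ℝ => (y + 1) * (x - 4 * (y / 3) ^ ((3 : ℝ) / 2))) (z ^ 2)
        = (z ^ 2 + 1) * (x - 4 * z ^ 3 / (3 : ℝ) ^ ((3 : ℝ) / 2)) := by
      simp only
      rw [rp' _ (sq_nonneg z), Real.sqrt_sq hz0.le, s3']
      ring
    have hx' : x = (10 * z ^ 3 + 6 * z) / (3 * Real.sqrt 3) := by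
      rw [eq_div_iff hspos.ne']
      linarith [hzeq]
    have hbound : ∀ y ∈ Set.Icc (12:ℝ) 27,
        (y + 1) * (x - 4 * (y / 3) ^ ((3 : ℝ) / 2))
          ≤ (z ^ 2 + 1) * (x - 4 * z ^ 3 / (3 : ℝ) ^ ((3 : ℝ) / 2)) := by
      intro y hy
      have hy0 : (0:ℝ) ≤ y := by linarith [hy.1]
      set t := Real.sqrt y with hts
      have ht0 : 0 ≤ t := Real.sqrt_nonneg y
      have hty : t ^ 2 = y := Real.sq_sqrt hy0
      have hk := key' z t hz0 ht0
      have h2 := (div_le_div_iff_of_pos_right hspos).mpr hk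
      have eL : (t^2+1) * ((10*z^3+6*z) / (3*Real.sqrt 3) - 4 * (t^3 / (3*Real.sqrt 3)))
          = ((t^2+1) * ((10*z^3+6*z) - 4*t^3)) / (3*Real.sqrt 3) := by
        field_simp
      have eR : (z^2+1) * ((10*z^3+6*z) / (3*Real.sqrt 3) - 4 * z^3 / (3*Real.sqrt 3))
          = ((z^2+1) * ((10*z^3+6*z) - 4*z^3)) / (3*Real.sqrt 3) := by
        field_simp
      rw [rp' y hy0, s3', ← hts, ← hty, hx', eL, eR]
      exact h2
    refine ⟨hmemIcc, ⟨⟨z ^ 2, hmemIcc, hval⟩, ?_⟩, ?_⟩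
    · rintro v ⟨y, hy, rfl⟩
      exact hbound y hy
    · intro y hy
      simp only [Set.mem_setOf_eq, hval]
      exact hbound y hy
end

section
/- For every real x with 276 ≤ x ≤ 657, the maximum over y ∈ [27,45] of (y+1)·(x − (y+9)²/12) equals (4/81)·[64 − 108x + (9x+16)^(3/2)], attained at the point y with 3y + 19 = 2·√(9x+16), which lies in [27,45]. -/
/-- for 276 ≤ x ≤ 657, the maximum over y ∈ [27,45] of
(y+1)(x − (y+9)²/12) equals (4/81)[64 − 108x + (9x+16)^(3/2)], attained at the
point y with 3y + 19 = 2√(9x+16), which lies in [27,45]. -/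
theorem max_on_Icc_twentyseven_fortyfive (x : ℝ) (hx1 : 276 ≤ x) (hx2 : x ≤ 657) :
    IsGreatest ((fun y : ℝ => (y + 1) * (x - (y + 9) ^ 2 / 12)) '' Set.Icc 27 45)
      ((4 / 81) * (64 - 108 * x + (9 * x + 16) ^ ((3 : ℝ) / 2))) ∧
    ∀ y : ℝ, 3 * y + 19 = 2 * Real.sqrt (9 * x + 16) →
      y ∈ Set.Icc (27 : ℝ) 45 ∧
      IsMaxOn (fun y : ℝ => (y + 1) * (x - (y + 9) ^ 2 / 12)) (Set.Icc 27 45) y := by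
  have hpos : (0:ℝ) ≤ 9 * x + 16 := by linarith
  set s : ℝ := Real.sqrt (9 * x + 16) with hsdef
  have hs : s ^ 2 = 9 * x + 16 := Real.sq_sqrt hpos
  have hsnn : 0 ≤ s := Real.sqrt_nonneg _
  have hsl : 50 ≤ s := by nlinarith
  have hsu : s ≤ 77 := by nlinarith
  have hcube : (9 * x + 16) ^ ((3 : ℝ) / 2) = s ^ 3 := by
    have h2 : (9 * x + 16) ^ ((1/2 : ℝ)) = s := by rw [hsdef, Real.sqrt_eq_rpow]
    rw [← h2, ← Real.rpow_natCast ((9 * x + 16) ^ ((1/2 : ℝ))) 3, ← Real.rpow_mul hpos]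
    norm_num
  set t : ℝ := (2 * s - 19) / 3 with htdef
  have ht1 : 27 ≤ t := by rw [htdef]; linarith
  have ht2 : t ≤ 45 := by rw [htdef]; linarith
  have hx12 : 12 * x = 3 * t ^ 2 + 38 * t + 99 := by
    rw [htdef]; field_simp; linarith [hs]
  have hub : ∀ y ∈ Set.Icc (27:ℝ) 45,
      (y + 1) * (x - (y + 9) ^ 2 / 12) ≤ (t + 1) * (x - (t + 9) ^ 2 / 12) := by
    intro y hy
    obtain ⟨hy1, hy2⟩ := hy
    have key : 12 * ((t + 1) * (x - (t + 9) ^ 2 / 12) - (y + 1) * (x - (y + 9) ^ 2 / 12))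
        = (t - y) ^ 2 * (2 * t + y + 19) := by
      linear_combination (t - y) * hx12
    nlinarith [sq_nonneg (t - y), mul_nonneg (sq_nonneg (t - y)) (show (0:ℝ) ≤ 2 * t + y + 19 by linarith)]
  have hval : (t + 1) * (x - (t + 9) ^ 2 / 12)
      = (4 / 81) * (64 - 108 * x + (9 * x + 16) ^ ((3 : ℝ) / 2)) := by
    rw [hcube, htdef]
    field_simp
    linear_combination (-(1944 * s)) * hs
  constructor
  · constructor
    · exact ⟨t, ⟨ht1, ht2⟩, hval⟩
    · rintro z ⟨y, hy, rfl⟩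
      rw [← hval]
      exact hub y hy
  · intro y hy
    have hyt : y = t := by rw [htdef]; linarith
    subst hyt
    exact ⟨⟨ht1, ht2⟩, fun z hz => hub z hz⟩
end

section
/- For every real x with 657 ≤ x ≤ 1781, the maximum over y ∈ [45,84] of (y+1)·(x − (1/4)·[1 − 8y + ((8y+3)/3)^(3/2)]) equals ((w²+5)/8)·(x − 1 + w²/4 − w³/(4·3^(3/2))), where w > 0 is the unique positive real satisfying 5w³ − 12·√3·w² + 15w − 6·√3 = 24·√3·x, and the maximum is attained at y = (w² − 3)/8 ∈ [45,84]. -/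
/-!
Substituting `w = √(8y + 3)` turns the objective into the polynomial
`G w = ((w² + 5)/8)(x - 1 + w²/4 - w³/(12√3))`, whose derivative is
`w (24√3 x - P w) / (96√3)` with `P` the cubic of the statement. Since `P` is strictly increasing
on `[3, ∞)`, `G` increases up to the root `w` of `P w = 24√3 x` and decreases after it, so `w`
maximizes `G` on `[3, ∞)`. The values `P (11√3) = 24√3 · 657` and `P (15√3) = 24√3 · 1781`
locate this root in `[11√3, 15√3]`, i.e. `(w² - 3)/8 ∈ [45, 84]`.
-/

open Real Set

namespace MaxOnIccFortyfiveEightyfour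

noncomputable def critCubic (w : ℝ) : ℝ :=
  5 * w ^ 3 - 12 * √3 * w ^ 2 + 15 * w - 6 * √3

noncomputable def objective (x y : ℝ) : ℝ :=
  (y + 1) * (x - (1 / 4) * (1 - 8 * y + ((8 * y + 3) / 3) ^ ((3 : ℝ) / 2)))

noncomputable def reducedObjective (x w : ℝ) : ℝ :=
  ((w ^ 2 + 5) / 8) * (x - 1 + w ^ 2 / 4 - w ^ 3 / (4 * (3 : ℝ) ^ ((3 : ℝ) / 2)))

lemma rpow_three_halves {u : ℝ} (hu : 0 ≤ u) : u ^ ((3 : ℝ) / 2) = √u ^ 3 := by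
  rw [rpow_div_two_eq_sqrt _ hu]
  norm_cast

lemma one_le_sqrt_three : 1 ≤ √3 := by
  rw [le_sqrt zero_le_one (by norm_num)]
  norm_num

lemma sqrt_three_le : √3 ≤ 7 / 4 := by
  rw [sqrt_le_left (by norm_num)]
  norm_num

lemma objective_eq_reducedObjective_sqrt (x : ℝ) {y : ℝ} (hy : 0 ≤ 8 * y + 3) :
    objective x y = reducedObjective x √(8 * y + 3) := by
  unfold objective reducedObjective
  rw [rpow_three_halves (by positivity), rpow_three_halves (by norm_num), sqrt_div hy]
  have hv := sq_sqrt hy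
  generalize √(8 * y + 3) = v at hv ⊢
  obtain rfl : y = (v ^ 2 - 3) / 8 := by linarith
  field_simp
  ring

lemma three_rpow_three_halves : (3 : ℝ) ^ ((3 : ℝ) / 2) = 3 * √3 := by
  rw [rpow_three_halves (by norm_num), pow_succ, sq_sqrt (by norm_num)]

lemma hasDerivAt_reducedObjective (x w : ℝ) :
    HasDerivAt (reducedObjective x) (w * (24 * √3 * x - critCubic w) / (96 * √3)) w := by
  have h := (((hasDerivAt_pow 2 w).add_const 5).div_const 8).mul
    ((((hasDerivAt_pow 2 w).div_const 4).const_add (x - 1)).sub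
      ((hasDerivAt_pow 3 w).div_const (4 * (3 : ℝ) ^ ((3 : ℝ) / 2))))
  refine h.congr_deriv ?_
  simp only [Pi.sub_apply, three_rpow_three_halves, critCubic]
  field_simp
  ring

lemma strictMonoOn_critCubic : StrictMonoOn critCubic (Ici 3) := by
  intro a (ha : 3 ≤ a) b (hb : 3 ≤ b) hab
  have hfactor : critCubic b - critCubic a =
      (b - a) * (5 * (a ^ 2 + a * b + b ^ 2) - 12 * √3 * (a + b) + 15) := by
    unfold critCubic
    ring
  have hpos : 0 < 5 * (a ^ 2 + a * b + b ^ 2) - 12 * √3 * (a + b) + 15 := by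
    nlinarith [mul_nonneg (sub_nonneg.2 ha) (sub_nonneg.2 hb), sqrt_three_le]
  nlinarith [mul_pos (sub_pos.2 hab) hpos]

lemma critCubic_lt_of_le_three {w : ℝ} (hw : w ≤ 3) : critCubic w < 180 := by
  have hs : 0 < √3 := by positivity
  unfold critCubic
  nlinarith [mul_nonneg (sub_nonneg.2 hw) (add_nonneg (sq_nonneg (2 * w + 3)) (sq_nonneg w)),
    mul_nonneg hs.le (sq_nonneg w)]

lemma critCubic_eleven_mul_sqrt_three : critCubic (11 * √3) = 24 * √3 * 657 := by
  have hs : √3 ^ 2 = 3 := sq_sqrt (by norm_num)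
  unfold critCubic
  linear_combination (5203 * √3) * hs

lemma critCubic_fifteen_mul_sqrt_three : critCubic (15 * √3) = 24 * √3 * 1781 := by
  have hs : √3 ^ 2 = 3 := sq_sqrt (by norm_num)
  unfold critCubic
  linear_combination (14175 * √3) * hs

lemma isMaxOn_reducedObjective {x w : ℝ} (hw : 3 ≤ w) (h : critCubic w = 24 * √3 * x) :
    IsMaxOn (reducedObjective x) (Ici 3) w := by
  have hderiv := hasDerivAt_reducedObjective x
  have hcont : Continuous (reducedObjective x) :=
    continuous_iff_continuousAt.2 fun v => (hderiv v).continuousAt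
  have hdiff : Differentiable ℝ (reducedObjective x) := fun v => (hderiv v).differentiableAt
  have hmono : MonotoneOn (reducedObjective x) (Icc 3 w) := by
    refine monotoneOn_of_deriv_nonneg (convex_Icc 3 w) hcont.continuousOn
      hdiff.differentiableOn fun v hv => ?_
    rw [interior_Icc] at hv
    have hlt : critCubic v < critCubic w := strictMonoOn_critCubic hv.1.le hw hv.2
    rw [(hderiv v).deriv]
    have hv0 : 0 < v := by linarith [hv.1]
    apply div_nonneg (mul_nonneg hv0.le (by linarith)) (by positivity)
  have hanti : AntitoneOn (reducedObjective x) (Ici w) := by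
    refine antitoneOn_of_deriv_nonpos (convex_Ici w) hcont.continuousOn
      hdiff.differentiableOn fun v hv => ?_
    rw [interior_Ici] at hv
    have hlt : critCubic w < critCubic v := strictMonoOn_critCubic hw (hw.trans hv.le) hv
    rw [(hderiv v).deriv]
    have hv0 : 0 < v := by linarith [hv.out]
    apply div_nonpos_of_nonpos_of_nonneg (mul_nonpos_of_nonneg_of_nonpos hv0.le (by linarith))
      (by positivity)
  intro v (hv : 3 ≤ v)
  rcases le_total v w with hvw | hwv
  · exact hmono ⟨hv, hvw⟩ ⟨hw, le_rfl⟩ hvw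
  · exact hanti self_mem_Ici hwv hwv

lemma objective_sq_sub_three_div_eight (x : ℝ) {w : ℝ} (hw : 0 ≤ w) :
    objective x ((w ^ 2 - 3) / 8) = reducedObjective x w := by
  rw [objective_eq_reducedObjective_sqrt x (by nlinarith),
    show 8 * ((w ^ 2 - 3) / 8) + 3 = w ^ 2 by ring, sqrt_sq hw]

lemma isMaxOn_objective {x w : ℝ} (hw : 3 ≤ w) (h : critCubic w = 24 * √3 * x) :
    IsMaxOn (objective x) (Ici (3 / 4)) ((w ^ 2 - 3) / 8) := by
  refine isMaxOn_iff.2 fun y (hy : 3 / 4 ≤ y) => ?_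
  rw [objective_sq_sub_three_div_eight x (by linarith),
    objective_eq_reducedObjective_sqrt x (by linarith)]
  refine isMaxOn_reducedObjective hw h ?_
  rw [mem_Ici, le_sqrt (by norm_num) (by linarith)]
  linarith

lemma mem_Icc_of_critCubic_eq {x w : ℝ} (hx : x ∈ Icc 657 1781) (h : critCubic w = 24 * √3 * x) :
    w ∈ Icc (11 * √3) (15 * √3) := by
  have hs := one_le_sqrt_three
  have hw : 3 ≤ w := by
    by_contra! hw
    nlinarith [critCubic_lt_of_le_three hw.le, hx.1]
  have h11 : (3 : ℝ) ≤ 11 * √3 := by linarith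
  have h15 : (3 : ℝ) ≤ 15 * √3 := by linarith
  constructor
  · rw [← strictMonoOn_critCubic.le_iff_le h11 hw, h, critCubic_eleven_mul_sqrt_three]
    nlinarith [hx.1]
  · rw [← strictMonoOn_critCubic.le_iff_le hw h15, h, critCubic_fifteen_mul_sqrt_three]
    nlinarith [hx.2]

lemma exists_critCubic_eq {x : ℝ} (hx : x ∈ Icc 657 1781) :
    ∃ w ∈ Icc (11 * √3) (15 * √3), critCubic w = 24 * √3 * x := by
  have hs := one_le_sqrt_three
  have hcont : ContinuousOn critCubic (Icc (11 * √3) (15 * √3)) := by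
    unfold critCubic
    fun_prop
  refine intermediate_value_Icc (by linarith) hcont ?_
  rw [critCubic_eleven_mul_sqrt_three, critCubic_fifteen_mul_sqrt_three]
  constructor <;> nlinarith [hx.1, hx.2]

end MaxOnIccFortyfiveEightyfour

open MaxOnIccFortyfiveEightyfour in
/-- for 657 ≤ x ≤ 1781, there is a unique positive real w with
5w³ − 12√3·w² + 15w − 6√3 = 24√3·x; for this w, y = (w²−3)/8 lies in [45,84] and
the maximum over y ∈ [45,84] of (y+1)·(x − (1/4)[1 − 8y + ((8y+3)/3)^(3/2)])
equals ((w²+5)/8)·(x − 1 + w²/4 − w³/(4·3^(3/2))), attained at y = (w²−3)/8. -/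
theorem max_on_Icc_fortyfive_eightyfour (x : ℝ) (hx1 : 657 ≤ x) (hx2 : x ≤ 1781) :
    (∃! w : ℝ, 0 < w ∧
      5 * w ^ 3 - 12 * Real.sqrt 3 * w ^ 2 + 15 * w - 6 * Real.sqrt 3
        = 24 * Real.sqrt 3 * x) ∧
    ∀ w : ℝ, 0 < w →
      5 * w ^ 3 - 12 * Real.sqrt 3 * w ^ 2 + 15 * w - 6 * Real.sqrt 3
        = 24 * Real.sqrt 3 * x →
      (w ^ 2 - 3) / 8 ∈ Set.Icc (45 : ℝ) 84 ∧
      IsGreatest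
        ((fun y : ℝ =>
            (y + 1) * (x - (1 / 4) * (1 - 8 * y + ((8 * y + 3) / 3) ^ ((3 : ℝ) / 2)))) ''
          Set.Icc 45 84)
        (((w ^ 2 + 5) / 8) * (x - 1 + w ^ 2 / 4 - w ^ 3 / (4 * (3 : ℝ) ^ ((3 : ℝ) / 2)))) ∧
      IsMaxOn
        (fun y : ℝ =>
          (y + 1) * (x - (1 / 4) * (1 - 8 * y + ((8 * y + 3) / 3) ^ ((3 : ℝ) / 2))))
        (Set.Icc 45 84) ((w ^ 2 - 3) / 8) := by
  have hx : x ∈ Icc 657 1781 := ⟨hx1, hx2⟩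
  have hs : (3 : ℝ) ≤ 11 * √3 := by linarith [one_le_sqrt_three]
  refine ⟨?_, fun w _ h => ?_⟩
  · obtain ⟨w, hwI, hw⟩ := exists_critCubic_eq hx
    refine ⟨w, ⟨by linarith [hwI.1], hw⟩, fun w' ⟨_, hw'⟩ => ?_⟩
    have hw'I := mem_Icc_of_critCubic_eq hx hw'
    exact strictMonoOn_critCubic.injOn (hs.trans hw'I.1) (hs.trans hwI.1) (hw'.trans hw.symm)
  · obtain ⟨hw11, hw15⟩ := mem_Icc_of_critCubic_eq hx h
    have hsq : √3 ^ 2 = 3 := sq_sqrt (by norm_num)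
    have hy : (w ^ 2 - 3) / 8 ∈ Icc (45 : ℝ) 84 := by
      constructor <;> nlinarith
    have hmax : IsMaxOn (objective x) (Icc 45 84) ((w ^ 2 - 3) / 8) :=
      (isMaxOn_objective (hs.trans hw11) h).on_subset fun y hy => le_trans (by norm_num) hy.1
    refine ⟨hy, ?_, hmax⟩
    show IsGreatest (objective x '' Icc 45 84) (reducedObjective x w)
    rw [← objective_sq_sub_three_div_eight x (by linarith)]
    exact ⟨mem_image_of_mem _ hy, forall_mem_image.2 hmax⟩
end
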